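/- The principal value distribution ζ^{−1}, defined by ζ^{−1}(φ) = lim_{ε→0} ∫_{|x|>ε} φ(x)/x dx, belongs to the Besov space B^{−1+1/p}_{p,∞}(ℝ) for every p ∈ (1,∞]. -/

import Mathlib

open MeasureTheory Real Filter ENNReal

noncomputable section

/-- Fourier transform of a real-valued Schwartz function. -/
def szFT (f : SchwartzMap ℝ ℝ) : ℝ → ℂ :=
  FourierTransform.fourier (fun x => (f x : ℂ))

/-- The `j`-th Littlewood–Paley kernel built from a low-frequency kernel `hlow` (corresponding
to the block `Δ_{-1}`) and a kernel `h`; index `j+1` corresponds to the block `Δ_j`, with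
kernel `h_j(y) = 2^j h(2^j y)`. -/
def lpKernel (hlow h : SchwartzMap ℝ ℝ) : ℕ → ℝ → ℝ
  | 0 => fun y => hlow y
  | (j + 1) => fun y => (2 : ℝ) ^ j * h ((2 : ℝ) ^ j * y)

/-- The `j`-th Littlewood–Paley block `Δ_{j-1} f = h_{j-1} * f`. -/
def lpBlock (hlow h : SchwartzMap ℝ ℝ) (j : ℕ) (f : ℝ → ℝ) : ℝ → ℝ :=
  fun x => ∫ y : ℝ, lpKernel hlow h j y * f (x - y)

/-- The nonhomogeneous Besov norm `‖f‖_{B^γ_{p,∞}} = sup_{j ≥ -1} 2^(jγ) ‖Δ_j f‖_{L_p}`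
(our index `j : ℕ` corresponds to the Littlewood–Paley level `j - 1`). -/
def besovNorm (hlow h : SchwartzMap ℝ ℝ) (γ : ℝ) (p : ℝ≥0∞) (f : ℝ → ℝ) : ℝ≥0∞ :=
  ⨆ j : ℕ, ENNReal.ofReal ((2 : ℝ) ^ (((j : ℝ) - 1) * γ)) * eLpNorm (lpBlock hlow h j f) p volume

/-- `(hlow, h)` is a standard Littlewood–Paley pair: `𝓕 hlow` is supported in a ball,
`𝓕 h` is supported in an annulus, and together they form a dyadic partition of unity. -/
def IsLPpair (hlow h : SchwartzMap ℝ ℝ) : Prop :=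
  (∀ ξ : ℝ, 4 / 3 < |ξ| → szFT hlow ξ = 0) ∧
  (∀ ξ : ℝ, |ξ| < 3 / 4 ∨ 8 / 3 < |ξ| → szFT h ξ = 0) ∧
  (∀ ξ : ℝ, szFT hlow ξ + ∑' j : ℕ, szFT h ((2 : ℝ) ^ (-(j : ℝ)) * ξ) = 1)

/-- The `j`-th Littlewood–Paley block of the principal value distribution `ζ^{-1} = p.v.(1/x)`:
`Δ_{j-1} ζ^{-1}(x) = ∫_0^∞ (h_{j-1}(x−y) − h_{j-1}(x+y))/y dy`. -/
def pvBlock (hlow h : SchwartzMap ℝ ℝ) (j : ℕ) : ℝ → ℝ :=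
  fun x => ∫ y in Set.Ioi (0 : ℝ), (lpKernel hlow h j (x - y) - lpKernel hlow h j (x + y)) / y

/-!
Write `pvConv f x = ∫_0^∞ (f (x - y) - f (x + y)) / y dy` for the convolution of `f` with
`p.v. 1/x`. Every block of `ζ^{-1}` is `pvConv` of a Littlewood–Paley kernel, and
`pvConv (c f (c ·)) = c (pvConv f) (c ·)`, so
`‖Δ_j ζ^{-1}‖_{L_p} = 2^{j(1-1/p)} ‖pvConv h‖_{L_p}`, which exactly cancels the Besov weight
`2^{j(-1+1/p)}`. It remains that `pvConv f ∈ L_p` for a Schwartz function `f` and `p > 1`: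
for `y ≤ c` the integrand is a difference quotient of `f`, controlled by `f'`, and for `y > c`
it is at most `(|f (x - y)| + |f (x + y)|) / c`; taking `c = |x| / 2` and using the decay of
`f'` gives `|pvConv f x| ≲ (1 + |x|)⁻¹`.
-/

open Set

def pvConv (f : ℝ → ℝ) (x : ℝ) : ℝ :=
  ∫ y in Ioi (0 : ℝ), (f (x - y) - f (x + y)) / y

lemma pvConv_dilate (f : ℝ → ℝ) {c : ℝ} (hc : 0 < c) (x : ℝ) :
    pvConv (fun y => c * f (c * y)) x = c * pvConv f (c * x) := by
  have hintegrand : ∀ y, (c * f (c * (x - y)) - c * f (c * (x + y))) / y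
      = (c * c) * ((f (c * x - c * y) - f (c * x + c * y)) / (c * y)) := by
    intro y
    rcases eq_or_ne y 0 with rfl | hy
    · simp
    · field_simp
  simp only [pvConv, hintegrand, integral_const_mul,
    integral_comp_mul_left_Ioi (fun u => (f (c * x - u) - f (c * x + u)) / u) 0 hc, mul_zero,
    smul_eq_mul]
  field_simp

lemma pvBlock_succ (hlow h : SchwartzMap ℝ ℝ) (j : ℕ) :
    pvBlock hlow h (j + 1) = fun x => (2 : ℝ) ^ j * pvConv h ((2 : ℝ) ^ j * x) :=
  funext (pvConv_dilate h (by positivity))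

lemma eLpNorm_dilate {E : Type*} [NormedAddCommGroup E] [NormedSpace ℝ E] (g : ℝ → E)
    {c : ℝ} (hc : 0 < c) (p : ℝ≥0∞) :
    eLpNorm (fun x => c • g (c * x)) p volume
      = ENNReal.ofReal (c ^ (1 - (1 / p).toReal)) * eLpNorm g p volume := by
  have hcomp : eLpNorm (fun x => g (c * x)) p volume
      = ENNReal.ofReal (c⁻¹) ^ (1 / p).toReal * eLpNorm g p volume := by
    rw [show (fun x => g (c * x)) = g ∘ (c * ·) from rfl,
      ← (measurableEmbedding_mulLeft₀ hc.ne').eLpNorm_map_measure,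
      Real.map_volume_mul_left hc.ne', abs_of_pos (inv_pos.2 hc),
      eLpNorm_smul_measure_of_ne_zero (by simpa using hc), smul_eq_mul]
  rw [show (fun x => c • g (c * x)) = c • fun x => g (c * x) from rfl, eLpNorm_const_smul,
    hcomp, ← mul_assoc, Real.enorm_eq_ofReal hc.le, ENNReal.ofReal_rpow_of_pos (inv_pos.2 hc),
    ← ENNReal.ofReal_mul hc.le, Real.inv_rpow hc.le, Real.rpow_sub hc, Real.rpow_one,
    div_eq_mul_inv c]

lemma eLpNorm_pvBlock_succ (hlow h : SchwartzMap ℝ ℝ) (j : ℕ) (p : ℝ≥0∞) :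
    eLpNorm (pvBlock hlow h (j + 1)) p volume
      = ENNReal.ofReal ((2 : ℝ) ^ ((j : ℝ) * (1 - (1 / p).toReal)))
        * eLpNorm (pvConv h) p volume := by
  rw [pvBlock_succ, Real.rpow_natCast_mul zero_le_two]
  exact eLpNorm_dilate (pvConv h) (by positivity) p

lemma abs_sub_div_le_of_abs_deriv_le {f : ℝ → ℝ} (hf : Differentiable ℝ f) {x y B : ℝ}
    (hy : 0 < y) (hB : ∀ z ∈ Icc (x - y) (x + y), |deriv f z| ≤ B) :
    |(f (x - y) - f (x + y)) / y| ≤ 2 * B := by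
  have hmvt := (convex_Icc (x - y) (x + y)).norm_image_sub_le_of_norm_deriv_le
    (fun z _ => hf z) hB (right_mem_Icc.2 (by linarith)) (left_mem_Icc.2 (by linarith))
  rw [Real.norm_eq_abs, Real.norm_eq_abs, show x - y - (x + y) = -(2 * y) by ring, abs_neg,
    abs_of_pos (by positivity : 0 < 2 * y)] at hmvt
  rw [abs_div, abs_of_pos hy, div_le_iff₀ hy]
  linarith

lemma one_add_sq_le_four_mul_one_add_sq {x z : ℝ} (h : |z - x| ≤ |x| / 2) :
    1 + x ^ 2 ≤ 4 * (1 + z ^ 2) := by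
  have hxz : |x| ≤ 2 * |z| := by linarith [abs_sub_abs_le_abs_sub x z, abs_sub_comm z x]
  nlinarith [sq_abs x, sq_abs z, abs_nonneg x]

lemma abs_pvConv_le {f : ℝ → ℝ} (hcont : Continuous f) (hint : Integrable f) {x c M : ℝ}
    (hc : 0 < c) (hM : ∀ y ∈ Ioc 0 c, |(f (x - y) - f (x + y)) / y| ≤ M) :
    |pvConv f x| ≤ M * c + 2 * (∫ z, |f z|) / c := by
  set φ := fun y => (f (x - y) - f (x + y)) / y
  set g := fun y => |f (x - y)| + |f (x + y)|
  have hφ : AEStronglyMeasurable φ volume := by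
    have := hcont.measurable
    exact (by fun_prop : Measurable φ).aestronglyMeasurable
  have hg : Integrable g := (hint.comp_sub_left x).abs.add (hint.comp_add_left x).abs
  have hg_integral : ∫ y, g y = 2 * ∫ z, |f z| := by
    rw [integral_add (hint.comp_sub_left x).abs (hint.comp_add_left x).abs,
      integral_sub_left_eq_self (fun z => |f z|), integral_add_left_eq_self (fun z => |f z|)]
    ring
  have hfar : ∀ y ∈ Ioi c, ‖φ y‖ ≤ g y / c := fun y (hy : c < y) => by
    rw [Real.norm_eq_abs, abs_div, abs_of_pos (hc.trans hy)]
    exact div_le_div₀ (by positivity) (abs_sub _ _) hc hy.le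
  have hM' : ∀ y ∈ Ioc 0 c, ‖φ y‖ ≤ M := hM
  have hnear_int : IntegrableOn φ (Ioc 0 c) :=
    Measure.integrableOn_of_bounded measure_Ioc_lt_top.ne hφ
      ((ae_restrict_mem measurableSet_Ioc).mono hM')
  have hfar_int : IntegrableOn φ (Ioi c) :=
    (hg.div_const c).integrableOn.mono' hφ.restrict ((ae_restrict_mem measurableSet_Ioi).mono hfar)
  have hnear : |∫ y in Ioc 0 c, φ y| ≤ M * c := by
    simpa [hc.le] using norm_setIntegral_le_of_norm_le_const (μ := volume) measure_Ioc_lt_top hM'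
  have hfar' : |∫ y in Ioi c, φ y| ≤ 2 * (∫ z, |f z|) / c :=
    calc |∫ y in Ioi c, φ y| ≤ ∫ y in Ioi c, g y / c :=
          norm_integral_le_of_norm_le (hg.div_const c).integrableOn
            ((ae_restrict_mem measurableSet_Ioi).mono hfar)
      _ ≤ ∫ y, g y / c :=
          setIntegral_le_integral (hg.div_const c) (ae_of_all _ fun y => by positivity)
      _ = 2 * (∫ z, |f z|) / c := by rw [integral_div, hg_integral]
  rw [pvConv, ← Ioc_union_Ioi_eq_Ioi hc.le,
    setIntegral_union (Ioc_disjoint_Ioi le_rfl) measurableSet_Ioi hnear_int hfar_int]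
  exact (abs_add_le _ _).trans (add_le_add hnear hfar')

lemma SchwartzMap.exists_one_add_sq_mul_abs_le (g : SchwartzMap ℝ ℝ) :
    ∃ A, ∀ z, (1 + z ^ 2) * |g z| ≤ A := by
  obtain ⟨A₀, -, h₀⟩ := g.decay 0 0
  obtain ⟨A₂, -, h₂⟩ := g.decay 2 0
  refine ⟨A₀ + A₂, fun z => ?_⟩
  have h₀ := h₀ z
  have h₂ := h₂ z
  simp only [norm_iteratedFDeriv_zero, Real.norm_eq_abs, pow_zero, one_mul, sq_abs] at h₀ h₂
  linarith

lemma SchwartzMap.exists_abs_pvConv_le (f : SchwartzMap ℝ ℝ) :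
    ∃ C, ∀ x, |pvConv f x| ≤ C * (1 + |x|)⁻¹ := by
  obtain ⟨A, hA⟩ := (SchwartzMap.derivCLM ℝ ℝ f).exists_one_add_sq_mul_abs_le
  simp only [SchwartzMap.derivCLM_apply] at hA
  have hderiv : ∀ z, |deriv f z| ≤ A := fun z =>
    (le_mul_of_one_le_left (abs_nonneg _) (by nlinarith [sq_nonneg z])).trans (hA z)
  set I := ∫ z, |f z|
  have hA₀ : 0 ≤ A := (abs_nonneg _).trans (hderiv 0)
  have hI₀ : 0 ≤ I := integral_nonneg fun _ => abs_nonneg _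
  have hbounded : ∀ x, |pvConv f x| ≤ 2 * A + 2 * I := fun x => by
    simpa using abs_pvConv_le f.continuous f.integrable one_pos
      fun y hy => abs_sub_div_le_of_abs_deriv_le f.differentiable hy.1 fun z _ => hderiv z
  have hdecay : ∀ x, |x| * |pvConv f x| ≤ 4 * A + 4 * I := by
    intro x
    rcases eq_or_ne x 0 with rfl | hx
    · simp only [abs_zero, zero_mul]
      positivity
    have hx' : 0 < |x| := abs_pos.2 hx
    have hnear : ∀ y ∈ Ioc 0 (|x| / 2),
        |(f (x - y) - f (x + y)) / y| ≤ 2 * (4 * A / (1 + x ^ 2)) := fun y hy =>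
      abs_sub_div_le_of_abs_deriv_le f.differentiable hy.1 fun z hz => by
        have hxz := one_add_sq_le_four_mul_one_add_sq (x := x) (z := z)
          (abs_sub_le_iff.2 ⟨by linarith [hz.2, hy.2], by linarith [hz.1, hy.2]⟩)
        rw [le_div_iff₀ (by positivity)]
        nlinarith [hA z, abs_nonneg (deriv f z)]
    calc |x| * |pvConv f x|
        ≤ |x| * (2 * (4 * A / (1 + x ^ 2)) * (|x| / 2) + 2 * I / (|x| / 2)) :=
          mul_le_mul_of_nonneg_left (abs_pvConv_le f.continuous f.integrable (half_pos hx') hnear)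
            hx'.le
      _ = 4 * A * (x ^ 2 / (1 + x ^ 2)) + 4 * I := by
          field_simp
          rw [sq_abs]
          ring
      _ ≤ 4 * A + 4 * I := by
          have : x ^ 2 / (1 + x ^ 2) ≤ 1 := div_le_one_of_le₀ (by linarith) (by positivity)
          nlinarith
  refine ⟨6 * A + 6 * I, fun x => ?_⟩
  rw [← div_eq_mul_inv, le_div_iff₀ (by positivity)]
  nlinarith [hbounded x, hdecay x]

lemma memLp_inv_one_add_abs {p : ℝ≥0∞} (hp : 1 < p) :
    MemLp (fun x : ℝ => (1 + |x|)⁻¹) p volume := by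
  have hmeas : AEStronglyMeasurable (fun x : ℝ => (1 + |x|)⁻¹) volume := by fun_prop
  rcases eq_or_ne p ⊤ with rfl | hp_top
  · refine memLp_top_of_bound hmeas 1 (ae_of_all _ fun x => ?_)
    rw [norm_inv, Real.norm_of_nonneg (by positivity)]
    exact inv_le_one_of_one_le₀ (le_add_of_nonneg_right (abs_nonneg x))
  · refine (integrable_norm_rpow_iff hmeas (zero_lt_one.trans hp).ne' hp_top).1 ?_
    have hr : (Module.finrank ℝ ℝ : ℝ) < p.toReal := by
      simpa using (ENNReal.toReal_lt_toReal ENNReal.one_ne_top hp_top).2 hp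
    refine (integrable_one_add_norm hr).congr (ae_of_all _ fun x => ?_)
    simp only [Real.norm_eq_abs]
    rw [abs_inv, abs_of_pos (by positivity : 0 < 1 + |x|),
      Real.inv_rpow (by positivity), Real.rpow_neg (by positivity)]

lemma SchwartzMap.eLpNorm_pvConv_lt_top (f : SchwartzMap ℝ ℝ) {p : ℝ≥0∞} (hp : 1 < p) :
    eLpNorm (pvConv f) p volume < ⊤ := by
  obtain ⟨C, hC⟩ := f.exists_abs_pvConv_le
  exact (eLpNorm_mono_real fun x => hC x).trans_lt
    ((memLp_inv_one_add_abs hp).const_mul C).eLpNorm_lt_top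

theorem principal_value_mem_besov_general
    (hlow h : SchwartzMap ℝ ℝ)
    (p : ℝ≥0∞) (hp : 1 < p) :
    (⨆ j : ℕ, ENNReal.ofReal ((2 : ℝ) ^ (((j : ℝ) - 1) * (-1 + (1 / p).toReal))) *
        eLpNorm (pvBlock hlow h j) p volume) ≠ ⊤ := by
  set s := (1 / p).toReal
  have hzero : eLpNorm (pvBlock hlow h 0) p volume < ⊤ := hlow.eLpNorm_pvConv_lt_top hp
  refine ne_top_of_le_ne_top
    (max_lt (ENNReal.mul_lt_top (ENNReal.ofReal_lt_top (r := 2 ^ (1 - s))) hzero)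
      (h.eLpNorm_pvConv_lt_top hp)).ne
    (iSup_le fun j => ?_)
  rcases j with _ | j
  · refine le_max_of_le_left (le_of_eq ?_)
    congr 3
    push_cast
    ring
  · have hweight : (((j + 1 : ℕ) : ℝ) - 1) * (-1 + s) + j * (1 - s) = 0 := by push_cast; ring
    refine le_max_of_le_right (le_of_eq ?_)
    rw [eLpNorm_pvBlock_succ, ← mul_assoc, ← ENNReal.ofReal_mul (by positivity),
      ← Real.rpow_add two_pos, hweight, Real.rpow_zero, ENNReal.ofReal_one, one_mul]

/-- The principal value distribution `ζ^{-1}` belongs to the Besov space `B^{−1+1/p}_{p,∞}(ℝ)`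
for every `p ∈ (1,∞]`, i.e. its Littlewood–Paley Besov norm is finite. -/
theorem principal_value_mem_besov
    (hlow h : SchwartzMap ℝ ℝ) (hLP : IsLPpair hlow h)
    (p : ℝ≥0∞) (hp : 1 < p) :
    (⨆ j : ℕ, ENNReal.ofReal ((2 : ℝ) ^ (((j : ℝ) - 1) * (-1 + (1 / p).toReal))) *
        eLpNorm (pvBlock hlow h j) p volume) ≠ ⊤ :=
  principal_value_mem_besov_general hlow h p hp
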